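/- arXiv:2208.11190 — 2 statements merged into one kernel-verified Lean document; each statement's English description precedes it below -/
import Mathlib

section
/- Let $T \geq 2$ and $2 \leq t \leq T-1$ be integers, $\delta \in (0,1)$, and $p_0, s, k > 0$. Define $\overline{\delta}(T,t) = \dfrac{(2^t - 2)(T+1) - (t-1) 2^t}{(2^t - 1)(T+1) - t\, 2^t}$. Then $\dfrac{\left[\frac{T+2-t}{T+1} - \frac{T+1-t}{T+1}\delta\right] p_0}{\left[\frac{T+2-t}{T+1} - \frac{T+1-t}{T+1}\delta\right] p_0 + (1-\delta) s} \geq \dfrac{\left[(1/2)^{t-1} - (1/2)^t \delta\right] p_0}{\left[(1/2)^{t-1} - (1/2)^t \delta\right] p_0 + (1-\delta) s}$ if and only if $\delta \leq \overline{\delta}(T,t)$. -/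
/-!
Both sides have the form `a p₀ / (a p₀ + (1 - δ) s)`, which is strictly increasing in `a > 0`, so
the inequality holds iff the sequential weight `((T + 2 - t) - (T + 1 - t) δ) / (T + 1)` is at least
the simultaneous weight `(2 - δ) / 2 ^ t`. Clearing denominators makes this linear in `δ`, with
positive coefficient `(2 ^ t - 1) (T + 1) - t 2 ^ t` in front of `δ`, whence the cutoff.
-/

theorem div_add_le_div_add_iff {α : Type*} [Field α] [LinearOrder α] [IsStrictOrderedRing α]
    {a b c : α} (ha : 0 < a + c) (hb : 0 < b + c) (hc : 0 < c) :
    a / (a + c) ≤ b / (b + c) ↔ a ≤ b := by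
  rw [div_le_div_iff₀ ha hb, mul_add, mul_add, mul_comm a b, add_le_add_iff_left,
    mul_le_mul_iff_left₀ hc]

theorem half_pow_pred_sub_half_pow_mul {t : ℕ} (ht : 1 ≤ t) (δ : ℝ) :
    (1 / 2 : ℝ) ^ (t - 1) - (1 / 2 : ℝ) ^ t * δ = (2 - δ) / 2 ^ t := by
  obtain ⟨n, rfl⟩ := Nat.exists_eq_add_of_le' ht
  simp only [Nat.add_sub_cancel, pow_succ, one_div, inv_pow]
  field_simp

theorem sequential_weight_pos {T t δ : ℝ} (hT : 0 < T + 1) (htT : t ≤ T + 1) (hδ : δ < 1) :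
    0 < (T + 2 - t) / (T + 1) - (T + 1 - t) / (T + 1) * δ := by
  have hnum : 0 < (T + 2 - t) - (T + 1 - t) * δ := by nlinarith
  calc (0 : ℝ) < ((T + 2 - t) - (T + 1 - t) * δ) / (T + 1) := div_pos hnum hT
    _ = _ := by ring

theorem critical_denominator_pos {T t : ℕ} (ht : 1 ≤ t) (htT : t + 1 ≤ T) :
    0 < ((2 : ℝ) ^ t - 1) * ((T : ℝ) + 1) - (t : ℝ) * (2 : ℝ) ^ t := by
  have htT' : (t : ℝ) + 2 ≤ (T : ℝ) + 1 := by exact_mod_cast Nat.add_le_add_right htT 1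
  have ht_lt : (t : ℝ) < 2 ^ t := by exact_mod_cast Nat.lt_two_pow_self
  have h_two_le : (2 : ℝ) ≤ 2 ^ t := le_self_pow₀ one_le_two (by omega)
  nlinarith [mul_le_mul_of_nonneg_left htT' (by linarith : (0 : ℝ) ≤ 2 ^ t - 1)]

theorem simultaneous_weight_le_sequential_weight_iff {T t q δ : ℝ} (hT : 0 < T + 1) (hq : 0 < q)
    (hD : 0 < (q - 1) * (T + 1) - t * q) :
    (2 - δ) / q ≤ (T + 2 - t) / (T + 1) - (T + 1 - t) / (T + 1) * δ ↔
      δ ≤ ((q - 2) * (T + 1) - (t - 1) * q) / ((q - 1) * (T + 1) - t * q) := by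
  have hA : (T + 2 - t) / (T + 1) - (T + 1 - t) / (T + 1) * δ =
      ((T + 2 - t) - (T + 1 - t) * δ) / (T + 1) := by ring
  rw [hA, div_le_div_iff₀ hq hT, le_div_iff₀ hD]
  constructor <;> intro h <;> linarith

theorem stmt_6_general (T t : ℕ) (ht : 2 ≤ t) (htT : t + 1 ≤ T)
    (δ p0 s : ℝ) (hδ : δ ∈ Set.Ioo (0:ℝ) 1) (hp0 : 0 < p0) (hs : 0 < s) :
    ((((T:ℝ) + 2 - t)/((T:ℝ)+1) - (((T:ℝ) + 1 - t)/((T:ℝ)+1)) * δ) * p0 /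
        ((((T:ℝ) + 2 - t)/((T:ℝ)+1) - (((T:ℝ) + 1 - t)/((T:ℝ)+1)) * δ) * p0 + (1-δ)*s) ≥
      ((1/2:ℝ)^(t-1) - (1/2:ℝ)^t * δ) * p0 /
        (((1/2:ℝ)^(t-1) - (1/2:ℝ)^t * δ) * p0 + (1-δ)*s))
    ↔ δ ≤ (((2:ℝ)^t - 2)*((T:ℝ)+1) - ((t:ℝ)-1)*(2:ℝ)^t) /
            (((2:ℝ)^t - 1)*((T:ℝ)+1) - (t:ℝ)*(2:ℝ)^t) := by
  obtain ⟨-, hδ1⟩ := hδ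
  have hc : 0 < (1 - δ) * s := mul_pos (sub_pos.2 hδ1) hs
  have hT : (0 : ℝ) < T + 1 := by positivity
  have htT' : (t : ℝ) ≤ T + 1 := by exact_mod_cast (by omega : t ≤ T + 1)
  have hA := sequential_weight_pos hT htT' hδ1
  have hsim : 0 < (2 - δ) / (2 : ℝ) ^ t := div_pos (by linarith) (by positivity)
  rw [half_pow_pred_sub_half_pow_mul (by omega), ge_iff_le,
    div_add_le_div_add_iff (by positivity) (by positivity) hc, mul_le_mul_iff_left₀ hp0]
  exact simultaneous_weight_le_sequential_weight_iff hT (by positivity) (critical_denominator_pos (by omega) htT)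

theorem stmt_6 (T t : ℕ) (hT : 2 ≤ T) (ht : 2 ≤ t) (htT : t + 1 ≤ T)
    (δ p0 s k : ℝ) (hδ : δ ∈ Set.Ioo (0:ℝ) 1) (hp0 : 0 < p0) (hs : 0 < s) (hk : 0 < k) :
    ((((T:ℝ) + 2 - t)/((T:ℝ)+1) - (((T:ℝ) + 1 - t)/((T:ℝ)+1)) * δ) * p0 /
        ((((T:ℝ) + 2 - t)/((T:ℝ)+1) - (((T:ℝ) + 1 - t)/((T:ℝ)+1)) * δ) * p0 + (1-δ)*s) ≥
      ((1/2:ℝ)^(t-1) - (1/2:ℝ)^t * δ) * p0 /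
        (((1/2:ℝ)^(t-1) - (1/2:ℝ)^t * δ) * p0 + (1-δ)*s))
    ↔ δ ≤ (((2:ℝ)^t - 2)*((T:ℝ)+1) - ((t:ℝ)-1)*(2:ℝ)^t) /
            (((2:ℝ)^t - 1)*((T:ℝ)+1) - (t:ℝ)*(2:ℝ)^t) :=
  stmt_6_general T t ht htT δ p0 s hδ hp0 hs
end

section
/- Let $p_0 > 0$, $(p_j)_{j\geq 1}$ positive, $S_l = \sum_{j=1}^{l-1} p_j$, $\gamma_l = \dfrac{\frac{1}{4}p_0 + S_l}{\frac{1}{2}p_0 + S_l}$ for $l \geq 2$, and $\delta \in (0,1)$. Then the map $l \mapsto \dfrac{\left(\frac{1}{2} - \frac{1}{4}\gamma_l \delta\right) p_0}{\left(\frac{1}{2} - \frac{1}{4}\gamma_l \delta\right) p_0 + (1 - \gamma_l \delta) S_l}$ is weakly decreasing in $l$ for $l \geq 2$. -/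
/-!
With `x = p₀/2 + S` and `y = p₀/4 + S` we have `γ = y/x`, and clearing `x` shows that the threshold
equals `p₀ / (p₀ + 4 g(S))` with `g(S) = S (a S + b) / (c S + d)`, where `a = 1 - δ`, `b = (1/2 - δ/4) p₀`,
`c = 2 - δ`, `d = (1 - δ/4) p₀`. All four coefficients are nonnegative for `δ ≤ 1`, and then
`g(T) (c S + d) - g(S) (c T + d) = (T - S) (a c S T + a d (S + T) + b d)`, so `g` is increasing on `S ≥ 0`.
Since `S_l` increases with `l`, the threshold decreases with `l`.
-/

noncomputable def Sfun (p : ℕ → ℝ) (m : ℕ) : ℝ := ∑ j ∈ Finset.Ico 1 m, p j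

noncomputable def gam (p0 : ℝ) (p : ℕ → ℝ) (m : ℕ) : ℝ :=
  ((1/4) * p0 + Sfun p m) / ((1/2) * p0 + Sfun p m)

lemma monotoneOn_mul_linear_div_linear {a b c d : ℝ} (ha : 0 ≤ a) (hb : 0 ≤ b) (hc : 0 ≤ c)
    (hd : 0 < d) : MonotoneOn (fun S => S * (a * S + b) / (c * S + d)) (Set.Ici 0) := by
  intro S (hS : 0 ≤ S) T (hT : 0 ≤ T) hST
  rw [div_le_div_iff₀ (by positivity) (by positivity)]
  have cross : T * (a * T + b) * (c * S + d) - S * (a * S + b) * (c * T + d)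
      = (T - S) * (a * c * S * T + a * d * (S + T) + b * d) := by ring
  have : 0 ≤ (T - S) * (a * c * S * T + a * d * (S + T) + b * d) :=
    mul_nonneg (sub_nonneg.2 hST) (by positivity)
  linarith

lemma Sfun_nonneg {p : ℕ → ℝ} (hp : ∀ j, 1 ≤ j → 0 ≤ p j) (m : ℕ) : 0 ≤ Sfun p m :=
  Finset.sum_nonneg fun j hj => hp j (Finset.mem_Ico.1 hj).1

lemma Sfun_monotone {p : ℕ → ℝ} (hp : ∀ j, 1 ≤ j → 0 ≤ p j) : Monotone (Sfun p) :=
  fun _ _ hmn => Finset.sum_le_sum_of_subset_of_nonneg (Finset.Ico_subset_Ico_right hmn)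
    fun j hj _ => hp j (Finset.mem_Ico.1 hj).1

noncomputable def dchGamma (p0 S : ℝ) : ℝ := ((1/4) * p0 + S) / ((1/2) * p0 + S)

noncomputable def dchThreshold (p0 δ S : ℝ) : ℝ :=
  ((1/2 - (1/4) * dchGamma p0 S * δ) * p0) /
    ((1/2 - (1/4) * dchGamma p0 S * δ) * p0 + (1 - dchGamma p0 S * δ) * S)

lemma dchThreshold_eq {p0 δ S : ℝ} (hp0 : 0 < p0) (hδ : δ ≤ 1) (hS : 0 ≤ S) :
    dchThreshold p0 δ S =
      p0 / (p0 + 4 * (S * ((1 - δ) * S + (1/2 - δ/4) * p0) / ((2 - δ) * S + (1 - δ/4) * p0))) := by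
  have hx : 0 < (1/2) * p0 + S := by positivity
  have hA : 0 < (2 - δ) * S + (1 - δ/4) * p0 := by nlinarith
  have hB : 0 ≤ (1 - δ) * S + (1/2 - δ/4) * p0 := by nlinarith
  have hγA : 1/2 - (1/4) * dchGamma p0 S * δ
      = ((2 - δ) * S + (1 - δ/4) * p0) / (4 * ((1/2) * p0 + S)) := by
    unfold dchGamma; field_simp; ring
  have hγB : 1 - dchGamma p0 S * δ = ((1 - δ) * S + (1/2 - δ/4) * p0) / ((1/2) * p0 + S) := by
    unfold dchGamma; field_simp; ring
  rw [dchThreshold, hγA, hγB, div_eq_div_iff (by positivity) (by positivity)]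
  generalize (2 - δ) * S + (1 - δ/4) * p0 = A at hA ⊢
  generalize (1 - δ) * S + (1/2 - δ/4) * p0 = B
  generalize (1/2) * p0 + S = x at hx ⊢
  field_simp

lemma dchThreshold_antitoneOn {p0 δ : ℝ} (hp0 : 0 < p0) (hδ : δ ≤ 1) :
    AntitoneOn (dchThreshold p0 δ) (Set.Ici 0) := by
  have hg := monotoneOn_mul_linear_div_linear (a := 1 - δ) (b := (1/2 - δ/4) * p0) (c := 2 - δ)
    (d := (1 - δ/4) * p0) (by linarith) (by nlinarith) (by linarith) (by nlinarith)
  have hg0 : ∀ S ∈ Set.Ici (0 : ℝ),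
      0 ≤ S * ((1 - δ) * S + (1/2 - δ/4) * p0) / ((2 - δ) * S + (1 - δ/4) * p0) := fun S hS => by
    simpa using hg Set.self_mem_Ici hS hS
  intro S hS T hT hST
  rw [dchThreshold_eq hp0 hδ hS, dchThreshold_eq hp0 hδ hT]
  have := hg hS hT hST
  exact div_le_div_of_nonneg_left hp0.le (by linarith [hg0 S hS]) (by linarith)

theorem stmt_15 (p0 : ℝ) (p : ℕ → ℝ) (hp0 : 0 < p0) (hp : ∀ j, 1 ≤ j → 0 < p j)
    (δ : ℝ) (hδ : δ ∈ Set.Ioo (0:ℝ) 1) :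
    ∀ l : ℕ, 2 ≤ l →
      ((1/2 - (1/4) * gam p0 p (l+1) * δ) * p0) /
        ((1/2 - (1/4) * gam p0 p (l+1) * δ) * p0 + (1 - gam p0 p (l+1) * δ) * Sfun p (l+1)) ≤
      ((1/2 - (1/4) * gam p0 p l * δ) * p0) /
        ((1/2 - (1/4) * gam p0 p l * δ) * p0 + (1 - gam p0 p l * δ) * Sfun p l) := by
  intro l _
  show dchThreshold p0 δ (Sfun p (l + 1)) ≤ dchThreshold p0 δ (Sfun p l)
  have hp' : ∀ j, 1 ≤ j → 0 ≤ p j := fun j hj => (hp j hj).le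
  exact dchThreshold_antitoneOn hp0 hδ.2.le (Sfun_nonneg hp' l) (Sfun_nonneg hp' (l + 1))
    (Sfun_monotone hp' l.le_succ)
end
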